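/- arXiv:2410.00791 — 2 statements merged into one kernel-verified Lean document; each statement's English description precedes it below -/
import Mathlib

section
/- Let Ψ : L²(𝕋ⁿ) → L²(𝕋ⁿ) be the unitary operator (Ψf)(ζ) = J(ζ)·f(τ(ζ)), where τ(ζ) = (ζ₁ζ₂⋯ζₙ, ζ₂ζ₃⋯ζₙ, …, ζ_{n−1}ζₙ, ζₙ) and J(ζ) = ∏_{j=2}^{n} ζ_j^{j−1}. Let P be the orthogonal projection of L²(𝕋ⁿ) onto H²(∂_d△ₙ) and Q the orthogonal projection of L²(𝕋ⁿ) onto H²(∂_d𝔻ⁿ). Then Ψ P Ψ⁻¹ = Q. -/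
open MeasureTheory Filter Topology ComplexConjugate

noncomputable section

instance fact_one_pos : Fact ((0:ℝ) < 1) := ⟨one_pos⟩

abbrev Torus (n : ℕ) := Fin n → AddCircle (1 : ℝ)

abbrev L2T (n : ℕ) := Lp ℂ 2 (volume : Measure (Torus n))

abbrev LinfT (n : ℕ) := Lp ℂ ⊤ (volume : Measure (Torus n))

def char {n : ℕ} (α : Fin n → ℤ) : Torus n → ℂ := fun x => ∏ j, fourier (α j) (x j)

lemma char_continuous {n : ℕ} (α : Fin n → ℤ) : Continuous (char α) :=
  continuous_finsetProd _ fun j _ => (fourier (α j)).continuous.comp (continuous_apply j)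

lemma char_memLp {n : ℕ} (α : Fin n → ℤ) (p : ENNReal) :
    MemLp (char α) p (volume : Measure (Torus n)) := by
  refine (memLp_top_of_bound ((char_continuous α).aestronglyMeasurable) 1 ?_).mono_exponent le_top
  filter_upwards with x
  simp only [char, norm_prod]
  calc ∏ j, ‖fourier (α j) (x j)‖
      = ∏ j : Fin n, (1:ℝ) := by
        refine Finset.prod_congr rfl fun j _ => ?_
        rw [fourier_apply]; exact Circle.norm_coe _
    _ ≤ 1 := by simp

def charL2 {n : ℕ} (α : Fin n → ℤ) : L2T n := (char_memLp α 2).toLp (char α)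

def hardyT (n : ℕ) : Submodule ℂ (L2T n) :=
  (Submodule.span ℂ
    (charL2 '' {α : Fin n → ℤ | ∀ k : Fin n, 0 ≤ (∑ j ∈ Finset.Iic k, α j) + (k.val : ℤ)})).topologicalClosure

def hardyD (n : ℕ) : Submodule ℂ (L2T n) :=
  (Submodule.span ℂ (charL2 '' {α : Fin n → ℤ | ∀ j, 0 ≤ α j})).topologicalClosure

instance hardyT.completeSpace (n : ℕ) : CompleteSpace (hardyT n) :=
  (Submodule.isClosed_topologicalClosure _).completeSpace_coe

instance hardyD.completeSpace (n : ℕ) : CompleteSpace (hardyD n) :=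
  (Submodule.isClosed_topologicalClosure _).completeSpace_coe

def IsToeplitzOn {n : ℕ} (K : Submodule ℂ (L2T n)) (φ : Torus n → ℂ) (T : K →L[ℂ] K) : Prop :=
  ∀ f g : K,
    (inner ℂ ((g : L2T n)) ((T f : L2T n)) : ℂ) =
      ∫ x, conj ((g : L2T n) x) * (φ x * (f : L2T n) x) ∂volume

def IsCoordMult {n : ℕ} (j : Fin n) (M : hardyT n →L[ℂ] hardyT n) : Prop :=
  ∀ f : hardyT n,
    ((M f : L2T n) : Torus n → ℂ) =ᵐ[volume]
      fun x => fourier 1 (x j) * ((f : L2T n) : Torus n → ℂ) x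

def IsHankelT {n : ℕ} (φ : Torus n → ℂ) (H : hardyT n →L[ℂ] L2T n) : Prop :=
  (∀ f : hardyT n, H f ∈ (hardyT n)ᗮ) ∧
    ∀ f : hardyT n, ∀ g : L2T n, g ∈ (hardyT n)ᗮ →
      (inner ℂ g (H f) : ℂ) = ∫ x, conj (g x) * (φ x * (f : L2T n) x) ∂volume

def IsAnalyticSymbolF {n : ℕ} (φ : Torus n → ℂ) : Prop :=
  ∀ α : Fin n → ℤ, (¬ ∀ k : Fin n, 0 ≤ ∑ j ∈ Finset.Iic k, α j) →
    ∫ x, φ x * char (-α) x ∂(volume : Measure (Torus n)) = 0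

def IsInnerSymbolF {n : ℕ} (φ : Torus n → ℂ) : Prop :=
  IsAnalyticSymbolF φ ∧ ∀ᵐ x ∂(volume : Measure (Torus n)), ‖φ x‖ = 1

def tauMap {n : ℕ} (x : Torus n) : Torus n := fun j => ∑ k ∈ Finset.Ici j, x k

def sigmaMap {n : ℕ} (x : Torus n) : Torus n :=
  fun j => if h : (j : ℕ) + 1 < n then x j - x ⟨(j : ℕ) + 1, h⟩ else x j

def jacF {n : ℕ} (x : Torus n) : ℂ := ∏ j : Fin n, fourier (j.val : ℤ) (x j)

def jacInvF {n : ℕ} (x : Torus n) : ℂ :=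
  ∏ j : Fin n, fourier (if j.val = 0 then (0 : ℤ) else -1) (x j)

/-!
The change of variables `ζ ↦ τ ζ` is a continuous surjective endomorphism of the compact group
`𝕋ⁿ`, hence preserves Haar measure, and `J · ζ^α ∘ τ = ζ^{δ α}` with
`(δ α)ₖ = (k - 1) + α₁ + ⋯ + αₖ`. Partial sums are a bijection of `ℤⁿ`, so `δ` maps `𝓘` onto
`ℤ₊ⁿ`; thus the unitary `Ψ` carries `H²(∂_d△ₙ)` onto `H²(∂_d𝔻ⁿ)` and conjugates the orthogonal
projections onto them.
-/

open Finset

theorem Fin.surjective_sum_Ici {G : Type*} [AddCommGroup G] (n : ℕ) :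
    Function.Surjective fun (x : Fin n → G) (j : Fin n) => ∑ k ∈ Ici j, x k := by
  intro y
  let g : ℕ → G := fun m => if h : m < n then y ⟨m, h⟩ else 0
  refine ⟨fun k => g k - g (k + 1), funext fun j => ?_⟩
  calc ∑ k ∈ Ici j, (g k - g (k + 1)) = -∑ m ∈ Ico (j : ℕ) n, (g (m + 1) - g m) := by
        rw [← Fin.map_valEmbedding_Ici, sum_map, ← sum_neg_distrib]
        simp only [neg_sub]; rfl
    _ = y j := by rw [sum_Ico_sub _ j.is_lt.le]; simp [g]

theorem Fin.surjective_sum_Iic {G : Type*} [AddCommGroup G] (n : ℕ) :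
    Function.Surjective fun (x : Fin n → G) (k : Fin n) => ∑ j ∈ Iic k, x j := by
  intro y
  obtain ⟨x, hx⟩ := Fin.surjective_sum_Ici (G := G) n (y ∘ Fin.rev)
  refine ⟨x ∘ Fin.rev, funext fun k => ?_⟩
  have := congrFun hx k.rev
  simp only [Function.comp_apply, Fin.rev_rev] at this
  calc ∑ j ∈ Iic k, x j.rev = ∑ j ∈ (Ici k.rev).map Fin.revPerm.toEmbedding, x j.rev := by
        rw [Fin.map_revPerm_Ici, Fin.rev_rev]
    _ = y k := by
        rw [sum_map, ← this]
        simp only [Equiv.coe_toEmbedding, Fin.revPerm_apply, Fin.rev_rev]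

theorem MeasureTheory.MeasurePreserving.of_addMonoidHom_of_surjective
    {G H : Type*} [AddGroup G] [TopologicalSpace G] [IsTopologicalAddGroup G] [CompactSpace G]
    [MeasurableSpace G] [BorelSpace G] [AddGroup H] [TopologicalSpace H] [IsTopologicalAddGroup H]
    [LocallyCompactSpace H] [MeasurableSpace H] [BorelSpace H]
    (μ : Measure G) [μ.IsAddHaarMeasure] [IsProbabilityMeasure μ]
    (ν : Measure H) [ν.IsAddHaarMeasure] [IsProbabilityMeasure ν]
    (f : G →+ H) (hf : Continuous f) (hsurj : Function.Surjective f) :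
    MeasurePreserving f μ ν := by
  have : (μ.map f).IsAddHaarMeasure := μ.isAddHaarMeasure_map f hf hsurj (by simp)
  have : IsProbabilityMeasure (μ.map f) := Measure.isProbabilityMeasure_map hf.aemeasurable
  exact ⟨hf.measurable, Measure.isAddHaarMeasure_eq_of_isProbabilityMeasure _ _⟩

instance AddCircle.isProbabilityMeasure_volume_one :
    IsProbabilityMeasure (volume : Measure (AddCircle (1 : ℝ))) :=
  ⟨by simp [AddCircle.measure_univ]⟩

theorem fourier_apply_add {T : ℝ} (m : ℤ) (x y : AddCircle T) :
    fourier m (x + y) = fourier m x * fourier m y := by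
  simp only [fourier_apply, smul_add, AddCircle.toCircle_add, Circle.coe_mul]

theorem fourier_apply_sum {T : ℝ} {ι : Type*} (s : Finset ι) (m : ℤ) (x : ι → AddCircle T) :
    fourier m (∑ i ∈ s, x i) = ∏ i ∈ s, fourier m (x i) := by
  classical
  induction s using Finset.induction with
  | empty => simp
  | insert a s ha ih => rw [sum_insert ha, prod_insert ha, fourier_apply_add, ih]

theorem fourier_sum {T : ℝ} {ι : Type*} (s : Finset ι) (m : ι → ℤ) (x : AddCircle T) :
    fourier (∑ i ∈ s, m i) x = ∏ i ∈ s, fourier (m i) x := by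
  classical
  induction s using Finset.induction with
  | empty => simp
  | insert a s ha ih => rw [sum_insert ha, prod_insert ha, fourier_add, ih]

theorem LinearIsometryEquiv.map_topologicalClosure {𝕜 E F : Type*} [NormedField 𝕜]
    [SeminormedAddCommGroup E] [SeminormedAddCommGroup F] [NormedSpace 𝕜 E] [NormedSpace 𝕜 F]
    (e : E ≃ₗᵢ[𝕜] F) (p : Submodule 𝕜 E) :
    p.topologicalClosure.map (e.toLinearEquiv : E →ₗ[𝕜] F) =
      (p.map (e.toLinearEquiv : E →ₗ[𝕜] F)).topologicalClosure :=
  SetLike.coe_injective (e.toHomeomorph.image_closure p)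

def tauHom (n : ℕ) : Torus n →+ Torus n where
  toFun := tauMap
  map_zero' := by ext; simp [tauMap]
  map_add' x y := by ext; simp [tauMap, sum_add_distrib]

theorem measurePreserving_tauMap (n : ℕ) : MeasurePreserving (tauMap (n := n)) volume volume :=
  .of_addMonoidHom_of_surjective _ _ (tauHom n)
    (continuous_pi fun _ => continuous_finsetSum _ fun k _ => continuous_apply k)
    (Fin.surjective_sum_Ici n)

def shiftedPartialSums {n : ℕ} (α : Fin n → ℤ) : Fin n → ℤ :=
  fun k => k + ∑ j ∈ Iic k, α j

theorem jacF_mul_char_tauMap {n : ℕ} (α : Fin n → ℤ) (x : Torus n) :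
    jacF x * char α (tauMap x) = char (shiftedPartialSums α) x := by
  have hreindex : char α (tauMap x) = ∏ k, ∏ j ∈ Iic k, fourier (α j) (x k) :=
    calc ∏ j, fourier (α j) (∑ k ∈ Ici j, x k)
        = ∏ j, ∏ k ∈ Ici j, fourier (α j) (x k) := by simp only [fourier_apply_sum]
      _ = ∏ k, ∏ j ∈ Iic k, fourier (α j) (x k) := prod_comm' (by simp)
  rw [hreindex]
  simp only [jacF, char, shiftedPartialSums, ← prod_mul_distrib, fourier_add, fourier_sum]

theorem shiftedPartialSums_image {n : ℕ} :
    shiftedPartialSums '' {α : Fin n → ℤ | ∀ k : Fin n, 0 ≤ (∑ j ∈ Iic k, α j) + (k.val : ℤ)} =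
      {δ : Fin n → ℤ | ∀ j, 0 ≤ δ j} := by
  have hsurj : Function.Surjective (shiftedPartialSums (n := n)) := fun δ => by
    obtain ⟨α, hα⟩ := Fin.surjective_sum_Iic n fun k => δ k - k
    exact ⟨α, funext fun k => by simp [shiftedPartialSums, congrFun hα k]⟩
  convert Set.image_preimage_eq _ hsurj using 2
  ext α
  simp [shiftedPartialSums, add_comm]

theorem coeFn_charL2 {n : ℕ} (α : Fin n → ℤ) : charL2 α =ᵐ[volume] char α :=
  (char_memLp α 2).coeFn_toLp

section Psi

variable {n : ℕ} (Ψ : L2T n ≃ₗᵢ[ℂ] L2T n)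

theorem apply_charL2
    (hΨ : ∀ f : L2T n, (⇑(Ψ f) : Torus n → ℂ) =ᵐ[volume] fun x => jacF x * f (tauMap x))
    (α : Fin n → ℤ) : Ψ (charL2 α) = charL2 (shiftedPartialSums α) := by
  have hcomp : (⇑(charL2 α) ∘ tauMap) =ᵐ[volume] (char α ∘ tauMap) :=
    (measurePreserving_tauMap n).quasiMeasurePreserving.ae_eq_comp (coeFn_charL2 α)
  refine Lp.ext ((hΨ _).trans ?_)
  filter_upwards [hcomp, coeFn_charL2 (shiftedPartialSums α)] with x hx hx'
  rw [hx', ← jacF_mul_char_tauMap]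
  exact congrArg (jacF x * ·) hx

theorem map_hardyT
    (hΨ : ∀ f : L2T n, (⇑(Ψ f) : Torus n → ℂ) =ᵐ[volume] fun x => jacF x * f (tauMap x)) :
    (hardyT n).map (Ψ.toLinearEquiv : L2T n →ₗ[ℂ] L2T n) = hardyD n := by
  rw [hardyT, hardyD, Ψ.map_topologicalClosure, Submodule.map_span, ← shiftedPartialSums_image,
    ← Set.image_comp, ← Set.image_comp]
  congr 2
  exact Set.image_congr fun α _ => apply_charL2 Ψ hΨ α

end Psi

theorem stmt8_general {n : ℕ} (Ψ : L2T n ≃ₗᵢ[ℂ] L2T n)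
    (hΨ : ∀ f : L2T n, (⇑(Ψ f) : Torus n → ℂ) =ᵐ[volume] fun x => jacF x * f (tauMap x)) :
    ∀ f : L2T n,
      Ψ ((Submodule.orthogonalProjectionOnto (hardyT n) (Ψ.symm f) : L2T n)) =
        (Submodule.orthogonalProjectionOnto (hardyD n) f : L2T n) := by
  intro f
  have h := Submodule.starProjection_map_apply Ψ (hardyT n) f
  simp only [map_hardyT Ψ hΨ] at h
  exact h.symm

/-- `Ψ P Ψ⁻¹ = Q`, where `P`, `Q` are the orthogonal projections of `L²(𝕋ⁿ)` onto
`H²(∂_d△ₙ)` and `H²(∂_d𝔻ⁿ)` respectively. -/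
theorem stmt8 {n : ℕ} (hn : 2 ≤ n) (Ψ : L2T n ≃ₗᵢ[ℂ] L2T n)
    (hΨ : ∀ f : L2T n, (⇑(Ψ f) : Torus n → ℂ) =ᵐ[volume] fun x => jacF x * f (tauMap x)) :
    ∀ f : L2T n,
      Ψ ((Submodule.orthogonalProjectionOnto (hardyT n) (Ψ.symm f) : L2T n)) =
        (Submodule.orthogonalProjectionOnto (hardyD n) f : L2T n) :=
  stmt8_general Ψ hΨ
end
end

section
/- Let φ ∈ L^∞(𝕋ⁿ). The following are equivalent: (i) φ is an analytic symbol for △ₙ (so T_{φ,△ₙ} is an analytic Toeplitz operator); (ii) T_{φ,△ₙ} commutes with 𝓜_{z_j} for every j = 1,…,n; (iii) the range of 𝓜_{z_j} is invariant under T_{φ,△ₙ} for every j = 1,…,n. -/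
open MeasureTheory Filter Topology ComplexConjugate

noncomputable section

/-! On the orthonormal family `e_α = ζ^α`, `α ∈ 𝓘`, spanning `H²(∂_d△ₙ)`, the Toeplitz operator has
matrix `⟨e_β, T e_α⟩ = φ̂(β - α)`, and `𝓜_{z_j}` is the shift `e_α ↦ e_{α + ε_j}` whose adjoint
kills `e_β` exactly when `β - ε_j ∉ 𝓘`. So the commutator `T 𝓜_{z_j} - 𝓜_{z_j} T` has entry
`φ̂(β - α - ε_j)` where `β - ε_j ∉ 𝓘` and zero elsewhere. A non-index minus an index always lies
outside `S`, so analytic symbols commute. Conversely, every `γ ∉ S` can be written as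
`γ = β - ε_j - α` with `α, β ∈ 𝓘` and `β - ε_j ∉ 𝓘`; if `T 𝓜_{z_j} e_α = 𝓜_{z_j} g`, then
`φ̂(γ) = ⟨e_β, 𝓜_{z_j} g⟩ = ⟨e_{β - ε_j}, g⟩ = 0`. -/

open MeasureTheory ComplexConjugate Submodule
open scoped InnerProductSpace

section Combinatorics

variable {n : ℕ}

def partialSums (n : ℕ) : (Fin n → ℤ) →+ (Fin n → ℤ) where
  toFun α k := ∑ i ∈ Finset.Iic k, α i
  map_zero' := by ext; simp
  map_add' α β := by ext; simp [Finset.sum_add_distrib]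

lemma partialSums_apply (α : Fin n → ℤ) (k : Fin n) :
    partialSums n α k = ∑ i ∈ Finset.Iic k, α i := rfl

lemma partialSums_single (j k : Fin n) (a : ℤ) :
    partialSums n (Pi.single j a) k = if j ≤ k then a else 0 := by
  simp [partialSums_apply, Finset.sum_pi_single']

lemma partialSums_single_comp_val (m : ℕ) (k : Fin n) (a : ℤ) :
    partialSums n ((Pi.single m a : ℕ → ℤ) ∘ Fin.val) k = if m ≤ k then a else 0 := by
  rw [partialSums_apply]
  split_ifs with hm
  · rw [Finset.sum_eq_single ⟨m, by omega⟩ (fun i _ hi => ?_)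
      (fun h => absurd (Finset.mem_Iic.mpr (Fin.le_def.mpr hm)) h)]
    · simp
    · exact Pi.single_eq_of_ne (M := fun _ => ℤ) (fun h => hi (Fin.ext h)) a
  · refine Finset.sum_eq_zero fun i hi => Pi.single_eq_of_ne (M := fun _ => ℤ) ?_ a
    have := Fin.le_def.mp (Finset.mem_Iic.mp hi)
    omega

-- The sets `𝓘` and `S` of the paper.
def hardyIndex (n : ℕ) : Set (Fin n → ℤ) := {α | ∀ k, 0 ≤ partialSums n α k + k}

def analyticIndex (n : ℕ) : Set (Fin n → ℤ) := {α | ∀ k, 0 ≤ partialSums n α k}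

lemma sub_notMem_analyticIndex {α δ : Fin n → ℤ} (hα : α ∈ hardyIndex n)
    (hδ : δ ∉ hardyIndex n) : δ - α ∉ analyticIndex n := by
  simp only [hardyIndex, analyticIndex, Set.mem_ofPred_eq, not_forall, not_le, map_sub,
    Pi.sub_apply] at hδ ⊢
  obtain ⟨k, hk⟩ := hδ
  exact ⟨k, by linarith [hα k]⟩

/-- Given a negative partial sum `s_{k₀}` of `γ`, the witness `α` has partial sums
`-1 - k₀ - s_{k₀}` at `k₀` and a large constant elsewhere. -/
lemma exists_shift_witness {γ : Fin n → ℤ} (hγ : γ ∉ analyticIndex n) :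
    ∃ (j : Fin n) (α : Fin n → ℤ), α ∈ hardyIndex n ∧ α + γ ∉ hardyIndex n ∧
      α + γ + Pi.single j 1 ∈ hardyIndex n := by
  simp only [analyticIndex, Set.mem_ofPred_eq, not_forall, not_le] at hγ
  obtain ⟨k₀, hk₀⟩ := hγ
  set C := ∑ i, |partialSums n γ i|
  have hC : ∀ k, |partialSums n γ k| ≤ C := fun k =>
    Finset.single_le_sum (f := fun i => |partialSums n γ i|) (fun i _ => abs_nonneg _)
      (Finset.mem_univ k)
  set c := -1 - (k₀ : ℤ) - partialSums n γ k₀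
  set α : Fin n → ℤ :=
    (Pi.single 0 C + Pi.single k₀.val (c - C) + Pi.single (k₀.val + 1) (C - c) : ℕ → ℤ) ∘ Fin.val
  have hα : ∀ k, partialSums n α k = if k = k₀ then c else C := by
    intro k
    simp only [α, Pi.add_comp, map_add, Pi.add_apply, partialSums_single_comp_val, Fin.ext_iff]
    split_ifs <;> omega
  refine ⟨k₀, α, fun k => ?_, fun h => ?_, fun k => ?_⟩
  · have := abs_le.mp (hC k)
    rw [hα]; split_ifs <;> omega
  · have := h k₀
    simp only [map_add, Pi.add_apply, hα, ↓reduceIte] at this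
    omega
  · have := abs_le.mp (hC k)
    simp only [map_add, Pi.add_apply, hα, partialSums_single]
    rcases eq_or_ne k k₀ with rfl | hk
    · simp only [↓reduceIte, le_refl]; omega
    · simp only [hk, ↓reduceIte]; split_ifs <;> omega

end Combinatorics

section Characters

variable {n : ℕ}

lemma char_eq_mFourier (α : Fin n → ℤ) : char α = UnitAddTorus.mFourier α := rfl

lemma integral_fourier_unitAddCircle (m : ℤ) :
    ∫ x : AddCircle (1 : ℝ), fourier m x = if m = 0 then 1 else 0 := by
  split_ifs with hm
  · simp [hm, measureReal_def, AddCircle.measure_univ]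
  · exact integral_eq_zero_of_add_right_eq_neg (fourier_add_half_inv_index hm one_pos)

lemma integral_char (α : Fin n → ℤ) : ∫ x, char α x = if α = 0 then 1 else 0 := by
  rw [show char α = fun x => ∏ j, fourier (α j) (x j) from rfl,
    integral_fintype_prod_volume_eq_prod (fun j x => fourier (α j) x)]
  simp_rw [integral_fourier_unitAddCircle]
  split_ifs with hα
  · simp [hα]
  · obtain ⟨j, hj⟩ := Function.ne_iff.mp hα
    exact Finset.prod_eq_zero (Finset.mem_univ j) (if_neg hj)

lemma charL2_ae_eq (α : Fin n → ℤ) : charL2 α =ᵐ[volume] char α := MemLp.coeFn_toLp _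

lemma orthonormal_charL2 : Orthonormal ℂ (charL2 (n := n)) := by
  rw [orthonormal_iff_ite]
  intro α β
  have hαβ : (if α = β then 1 else 0 : ℂ) = if β - α = 0 then 1 else 0 := by
    simp [sub_eq_zero, eq_comm]
  rw [L2.inner_def, hαβ, ← integral_char (β - α)]
  refine integral_congr_ae ?_
  filter_upwards [charL2_ae_eq α, charL2_ae_eq β] with x hα hβ
  rw [hα, hβ, RCLike.inner_apply, char_eq_mFourier, char_eq_mFourier, char_eq_mFourier,
    ← UnitAddTorus.mFourier_neg, ← UnitAddTorus.mFourier_add, ← sub_eq_add_neg]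

end Characters

section HardySpace

variable {n : ℕ}

lemma hardyT_eq_closure_span :
    hardyT n = (span ℂ (charL2 '' hardyIndex n)).topologicalClosure := rfl

lemma charL2_mem_hardyT {α : Fin n → ℤ} (hα : α ∈ hardyIndex n) : charL2 α ∈ hardyT n :=
  le_topologicalClosure _ (subset_span ⟨α, hα, rfl⟩)

def hardyChar (α : hardyIndex n) : hardyT n := ⟨charL2 α, charL2_mem_hardyT α.2⟩

lemma coe_hardyChar (α : hardyIndex n) : (hardyChar α : L2T n) = charL2 α := rfl

lemma hardyChar_ae_eq (α : hardyIndex n) :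
    (hardyChar α : L2T n) =ᵐ[volume] char (α : Fin n → ℤ) :=
  charL2_ae_eq (α : Fin n → ℤ)

lemma dense_span_range_hardyChar :
    Dense (span ℂ (Set.range (hardyChar (n := n))) : Set (hardyT n)) := by
  have hspan : (span ℂ (Set.range (hardyChar (n := n)))).map (hardyT n).subtype =
      span ℂ (charL2 '' hardyIndex n) := by
    rw [map_span, ← Set.range_comp, Set.image_eq_range]
    rfl
  refine (Subtype.dense_iff (s := (hardyT n : Set (L2T n)))).mpr ?_
  show (hardyT n : Set (L2T n)) ⊆ closure ((hardyT n).subtype '' _)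
  rw [← map_coe, hspan, ← topologicalClosure_coe, ← hardyT_eq_closure_span]

lemma hardyT_ext {x y : hardyT n}
    (h : ∀ α ∈ hardyIndex n, ⟪charL2 α, (x : L2T n)⟫_ℂ = ⟪charL2 α, (y : L2T n)⟫_ℂ) : x = y := by
  have hxy : innerSL ℂ x = innerSL ℂ y := by
    refine ContinuousLinearMap.ext_on dense_span_range_hardyChar ?_
    rintro - ⟨α, rfl⟩
    simp only [innerSL_apply_apply, ← inner_conj_symm x, ← inner_conj_symm y, coe_inner]
    exact congrArg conj (h α α.2)
  exact ext_inner_right ℂ fun v => by simpa using congr($hxy v)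

lemma ContinuousLinearMap.ext_hardyT {A B : hardyT n →L[ℂ] hardyT n}
    (h : ∀ α : hardyIndex n, ∀ β ∈ hardyIndex n,
      ⟪charL2 β, (A (hardyChar α) : L2T n)⟫_ℂ = ⟪charL2 β, (B (hardyChar α) : L2T n)⟫_ℂ) :
    A = B :=
  ContinuousLinearMap.ext_on dense_span_range_hardyChar <| by
    rintro - ⟨α, rfl⟩
    exact hardyT_ext (h α)

lemma inner_charL2_eq_zero_of_notMem {γ : Fin n → ℤ} (hγ : γ ∉ hardyIndex n) (f : hardyT n) :
    ⟪charL2 γ, (f : L2T n)⟫_ℂ = 0 := by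
  have h : (innerSL ℂ (charL2 γ)).comp (hardyT n).subtypeL = 0 := by
    refine ContinuousLinearMap.ext_on dense_span_range_hardyChar ?_
    rintro - ⟨α, rfl⟩
    exact orthonormal_charL2.inner_eq_zero fun h => hγ (h ▸ α.2)
  simpa using congr($h f)

end HardySpace

section Operators

variable {n : ℕ}

def fourierCoeffTorus (φ : Torus n → ℂ) (γ : Fin n → ℤ) : ℂ := ∫ x, φ x * char (-γ) x

lemma isAnalyticSymbolF_iff {φ : Torus n → ℂ} :
    IsAnalyticSymbolF φ ↔ ∀ γ ∉ analyticIndex n, fourierCoeffTorus φ γ = 0 := Iff.rfl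

lemma IsToeplitzOn.inner_charL2_apply {φ : Torus n → ℂ} {T : hardyT n →L[ℂ] hardyT n}
    (hT : IsToeplitzOn (hardyT n) φ T) {f : hardyT n} {α : Fin n → ℤ}
    (hf : (f : L2T n) =ᵐ[volume] char α) {β : Fin n → ℤ} (hβ : β ∈ hardyIndex n) :
    ⟪charL2 β, (T f : L2T n)⟫_ℂ = fourierCoeffTorus φ (β - α) := by
  rw [← coe_hardyChar ⟨β, hβ⟩, hT, coe_hardyChar]
  refine integral_congr_ae ?_
  filter_upwards [charL2_ae_eq β, hf] with x hβx hfx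
  rw [hβx, hfx, show -(β - α) = α + -β by abel]
  simp only [char_eq_mFourier, UnitAddTorus.mFourier_add, UnitAddTorus.mFourier_neg]
  ring

lemma IsCoordMult.inner_charL2_apply {j : Fin n} {M : hardyT n →L[ℂ] hardyT n}
    (hM : IsCoordMult j M) (f : hardyT n) (β : Fin n → ℤ) :
    ⟪charL2 β, (M f : L2T n)⟫_ℂ = ⟪charL2 (β - Pi.single j 1), (f : L2T n)⟫_ℂ := by
  rw [L2.inner_def, L2.inner_def]
  refine integral_congr_ae ?_
  filter_upwards [charL2_ae_eq β, charL2_ae_eq (β - Pi.single j 1), hM f] with x hβ hβj hMf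
  rw [RCLike.inner_apply, RCLike.inner_apply, hβ, hβj, hMf, char_eq_mFourier, char_eq_mFourier,
    ← UnitAddTorus.mFourier_neg, ← UnitAddTorus.mFourier_neg, ← UnitAddTorus.mFourier_single,
    show -(β - Pi.single j 1) = -β + Pi.single j 1 by abel, UnitAddTorus.mFourier_add]
  ring

lemma IsCoordMult.apply_hardyChar_ae_eq {j : Fin n} {M : hardyT n →L[ℂ] hardyT n}
    (hM : IsCoordMult j M) (α : hardyIndex n) :
    (M (hardyChar α) : L2T n) =ᵐ[volume] char ((α : Fin n → ℤ) + Pi.single j 1) := by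
  filter_upwards [hM (hardyChar α), hardyChar_ae_eq α] with x hMx hαx
  rw [hMx, hαx]
  simp only [char_eq_mFourier, UnitAddTorus.mFourier_add, UnitAddTorus.mFourier_single, mul_comm]

lemma IsToeplitzOn.commute_of_isAnalyticSymbolF {φ : Torus n → ℂ}
    {T : hardyT n →L[ℂ] hardyT n} (hT : IsToeplitzOn (hardyT n) φ T) {j : Fin n}
    {M : hardyT n →L[ℂ] hardyT n} (hM : IsCoordMult j M) (hφ : IsAnalyticSymbolF φ) :
    T * M = M * T := by
  refine ContinuousLinearMap.ext_hardyT fun α β hβ => ?_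
  rw [mul_apply_eq_comp, mul_apply_eq_comp,
    hT.inner_charL2_apply (hM.apply_hardyChar_ae_eq α) hβ, hM.inner_charL2_apply,
    sub_add_eq_sub_sub_swap]
  by_cases hβj : β - Pi.single j 1 ∈ hardyIndex n
  · exact (hT.inner_charL2_apply (hardyChar_ae_eq α) hβj).symm
  · rw [inner_charL2_eq_zero_of_notMem hβj]
    exact hφ _ (sub_notMem_analyticIndex α.2 hβj)

lemma IsToeplitzOn.isAnalyticSymbolF_of_mapsTo_range {φ : Torus n → ℂ}
    {T : hardyT n →L[ℂ] hardyT n} (hT : IsToeplitzOn (hardyT n) φ T)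
    {M : Fin n → hardyT n →L[ℂ] hardyT n} (hM : ∀ j, IsCoordMult j (M j))
    (hTM : ∀ j f, T (M j f) ∈ Set.range (M j)) : IsAnalyticSymbolF φ := by
  refine isAnalyticSymbolF_iff.mpr fun γ hγ => ?_
  obtain ⟨j, α, hα, hαγ, hαγj⟩ := exists_shift_witness hγ
  obtain ⟨g, hg⟩ := hTM j (hardyChar ⟨α, hα⟩)
  have h := hT.inner_charL2_apply ((hM j).apply_hardyChar_ae_eq ⟨α, hα⟩) hαγj
  rwa [← hg, (hM j).inner_charL2_apply, add_sub_cancel_right, inner_charL2_eq_zero_of_notMem hαγ,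
    show α + γ + Pi.single j 1 - (α + Pi.single j 1) = γ by abel, eq_comm] at h

end Operators

theorem stmt17_general {n : ℕ} (φ : LinfT n)
    (T : hardyT n →L[ℂ] hardyT n) (hT : IsToeplitzOn (hardyT n) (⇑φ) T)
    (M : Fin n → (hardyT n →L[ℂ] hardyT n)) (hM : ∀ j, IsCoordMult j (M j)) :
    (IsAnalyticSymbolF (⇑φ) ↔ ∀ j : Fin n, T * M j = M j * T) ∧
    (IsAnalyticSymbolF (⇑φ) ↔
      ∀ j : Fin n, ∀ f : hardyT n, T (M j f) ∈ Set.range (M j)) := by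
  have commute_of_analytic (hφ : IsAnalyticSymbolF ⇑φ) (j : Fin n) : T * M j = M j * T :=
    hT.commute_of_isAnalyticSymbolF (hM j) hφ
  have mapsTo_range_of_commute (hc : ∀ j, T * M j = M j * T) (j : Fin n) (f : hardyT n) :
      T (M j f) ∈ Set.range (M j) :=
    ⟨T f, by rw [← mul_apply_eq_comp, ← hc j, mul_apply_eq_comp]⟩
  have analytic_of_mapsTo_range := hT.isAnalyticSymbolF_of_mapsTo_range hM
  exact ⟨⟨commute_of_analytic, fun hc => analytic_of_mapsTo_range (mapsTo_range_of_commute hc)⟩,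
    ⟨fun hφ => mapsTo_range_of_commute (commute_of_analytic hφ), analytic_of_mapsTo_range⟩⟩

/-- `T_{φ,△ₙ}` is analytic iff it commutes with every `𝓜_{z_j}` iff the range of each
`𝓜_{z_j}` is invariant under `T_{φ,△ₙ}`. -/
theorem stmt17 {n : ℕ} (hn : 2 ≤ n) (φ : LinfT n)
    (T : hardyT n →L[ℂ] hardyT n) (hT : IsToeplitzOn (hardyT n) (⇑φ) T)
    (M : Fin n → (hardyT n →L[ℂ] hardyT n)) (hM : ∀ j, IsCoordMult j (M j)) :
    (IsAnalyticSymbolF (⇑φ) ↔ ∀ j : Fin n, T * M j = M j * T) ∧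
    (IsAnalyticSymbolF (⇑φ) ↔
      ∀ j : Fin n, ∀ f : hardyT n, T (M j f) ∈ Set.range (M j)) :=
  stmt17_general φ T hT M hM
end
end
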